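/- For 0 < δ ≤ 1, the altitude h₀(δ) = δ√d/√(δ²d - δ² + 1) of the distorted Freudenthal simplex is strictly increasing in δ, with h₀(0)=0, h₀(1/√(d+1)) = 1/√2, and h₀(1) = 1. -/

import Mathlib

/-!
Squaring removes the roots: for `0 ≤ a < b` the comparison `h₀(a) < h₀(b)` becomes, after
cross-multiplying, `a² d (b²(d-1)+1) < b² d (a²(d-1)+1)`, whose two sides differ by `d (b² - a²) > 0`.
-/

open Real Set

noncomputable section

namespace FreudenthalSimplex

/-- The altitude `h₀(δ)` of the distorted Freudenthal simplex in `ℝ^d`, with `d` taken real. -/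
def altitude (d δ : ℝ) : ℝ := δ * √d / √(δ ^ 2 * d - δ ^ 2 + 1)

variable {d : ℝ}

theorem altitude_radicand_pos (hd : 1 ≤ d) (δ : ℝ) : 0 < δ ^ 2 * d - δ ^ 2 + 1 := by
  nlinarith [sq_nonneg δ]

theorem altitude_strictMonoOn (hd : 1 ≤ d) : StrictMonoOn (altitude d) (Ici 0) := by
  intro a (ha : 0 ≤ a) b (hb : 0 ≤ b) hab
  have hA := altitude_radicand_pos hd a
  have hB := altitude_radicand_pos hd b
  unfold altitude
  rw [div_lt_div_iff₀ (sqrt_pos.2 hA) (sqrt_pos.2 hB)]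
  refine (pow_lt_pow_iff_left₀ (by positivity) (by positivity) two_ne_zero).1 ?_
  simp only [mul_pow, sq_sqrt (by linarith : (0 : ℝ) ≤ d), sq_sqrt hA.le, sq_sqrt hB.le]
  have hab2 : a ^ 2 < b ^ 2 := pow_lt_pow_left₀ hab ha two_ne_zero
  nlinarith [mul_lt_mul_of_pos_right hab2 (by linarith : (0 : ℝ) < d)]

theorem altitude_zero (d : ℝ) : altitude d 0 = 0 := by
  simp [altitude]

theorem altitude_one (hd : 0 < d) : altitude d 1 = 1 := by
  simp [altitude, (sqrt_pos.2 hd).ne']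

theorem altitude_inv_sqrt_succ (hd : 0 < d) : altitude d (1 / √(d + 1)) = 1 / √2 := by
  have hd1 : 0 < d + 1 := by linarith
  have hradicand : (1 / √(d + 1)) ^ 2 * d - (1 / √(d + 1)) ^ 2 + 1 = 2 * d / (d + 1) := by
    rw [div_pow, one_pow, sq_sqrt hd1.le]
    field_simp
    ring
  have : √(d + 1) ≠ 0 := (sqrt_pos.2 hd1).ne'
  have : √d ≠ 0 := (sqrt_pos.2 hd).ne'
  rw [altitude, hradicand, sqrt_div (by positivity), sqrt_mul zero_le_two]
  field_simp

end FreudenthalSimplex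

end

open FreudenthalSimplex

theorem stmt_16 (d : ℕ) (hd : 1 ≤ d) :
    let h : ℝ → ℝ := fun δ => δ * Real.sqrt d / Real.sqrt (δ ^ 2 * d - δ ^ 2 + 1)
    StrictMonoOn h (Set.Icc 0 1) ∧ h 0 = 0 ∧
      h (1 / Real.sqrt (d + 1)) = 1 / Real.sqrt 2 ∧ h 1 = 1 := by
  have hd1 : (1 : ℝ) ≤ d := by exact_mod_cast hd
  have hd0 : (0 : ℝ) < d := by linarith
  exact ⟨(altitude_strictMonoOn hd1).mono Icc_subset_Ici_self, altitude_zero _,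
    altitude_inv_sqrt_succ hd0, altitude_one hd0⟩
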